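/- arXiv:2007.12446 — 5 statements merged into one kernel-verified Lean document; each statement's English description precedes it below -/
import Mathlib

section
/- Let σ₁,…,σ_p ∈ [0,1]. Then sup over β, β' ∈ ℝ^p with ‖β‖₂ ≤ 1, ‖β'‖₂ ≤ 1 of ∑_{j=1}^p (1−σ_j²)(β_j² + β'_j² + 2σ_j β_j β'_j) equals max_{j=1,…,p} 2(1−σ_j)(1+σ_j)². -/
open BigOperators

/-- the supremum of the TD quadratic form over the product of unit
balls equals `max_j 2(1−σ_j)(1+σ_j)²` (case `p = p'`). -/
theorem td_sup_representative_task_set (p : ℕ) (hp : 0 < p)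
    (σ : Fin p → ℝ) (hσ : ∀ j, σ j ∈ Set.Icc (0 : ℝ) 1) :
    sSup {v : ℝ | ∃ β β' : Fin p → ℝ,
        (∑ j : Fin p, (β j) ^ 2) ≤ 1 ∧ (∑ j : Fin p, (β' j) ^ 2) ≤ 1 ∧
        v = ∑ j : Fin p, (1 - σ j ^ 2) *
              ((β j) ^ 2 + (β' j) ^ 2 + 2 * σ j * β j * β' j)}
      = ⨆ j : Fin p, 2 * (1 - σ j) * (1 + σ j) ^ 2 := by
  have hne : Nonempty (Fin p) := ⟨⟨0, hp⟩⟩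
  set f : Fin p → ℝ := fun j => 2 * (1 - σ j) * (1 + σ j) ^ 2 with hf
  have hbddf : BddAbove (Set.range f) := Set.Finite.bddAbove (Set.finite_range f)
  set M : ℝ := ⨆ j, f j with hM
  have hfM : ∀ j, f j ≤ M := fun j => le_ciSup hbddf j
  have hf0 : ∀ j, 0 ≤ f j := by
    intro j
    obtain ⟨h0, h1⟩ := hσ j
    have : (0:ℝ) ≤ 1 - σ j := by linarith
    positivity
  have hM0 : 0 ≤ M := le_trans (hf0 (Classical.arbitrary _)) (hfM _)
  -- upper bound for every element of the set
  have hub : ∀ v ∈ {v : ℝ | ∃ β β' : Fin p → ℝ,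
        (∑ j : Fin p, (β j) ^ 2) ≤ 1 ∧ (∑ j : Fin p, (β' j) ^ 2) ≤ 1 ∧
        v = ∑ j : Fin p, (1 - σ j ^ 2) *
              ((β j) ^ 2 + (β' j) ^ 2 + 2 * σ j * β j * β' j)}, v ≤ M := by
    rintro v ⟨β, β', hβ, hβ', rfl⟩
    have key : ∀ j, (1 - σ j ^ 2) * ((β j) ^ 2 + (β' j) ^ 2 + 2 * σ j * β j * β' j)
        ≤ (M / 2) * ((β j) ^ 2 + (β' j) ^ 2) := by
      intro j
      obtain ⟨h0, h1⟩ := hσ j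
      have hle : f j / 2 ≤ M / 2 := by linarith [hfM j]
      have hstep : (1 - σ j ^ 2) * ((β j) ^ 2 + (β' j) ^ 2 + 2 * σ j * β j * β' j)
          ≤ (f j / 2) * ((β j) ^ 2 + (β' j) ^ 2) := by
        have h2 : 2 * β j * β' j ≤ (β j) ^ 2 + (β' j) ^ 2 := by
          nlinarith [sq_nonneg (β j - β' j)]
        simp only [hf]
        nlinarith [sq_nonneg (β j - β' j), mul_nonneg h0 (sq_nonneg (β j - β' j)),
          mul_nonneg (mul_nonneg h0 h0) (sq_nonneg (β j - β' j))]
      calc _ ≤ (f j / 2) * ((β j) ^ 2 + (β' j) ^ 2) := hstep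
        _ ≤ (M / 2) * ((β j) ^ 2 + (β' j) ^ 2) := by
            apply mul_le_mul_of_nonneg_right hle; positivity
    calc ∑ j, (1 - σ j ^ 2) * ((β j) ^ 2 + (β' j) ^ 2 + 2 * σ j * β j * β' j)
        ≤ ∑ j, (M / 2) * ((β j) ^ 2 + (β' j) ^ 2) :=
          Finset.sum_le_sum fun j _ => key j
      _ = (M / 2) * (∑ j, (β j) ^ 2 + ∑ j, (β' j) ^ 2) := by
          rw [← Finset.mul_sum, Finset.sum_add_distrib]
      _ ≤ (M / 2) * 2 := by
          apply mul_le_mul_of_nonneg_left _ (by linarith); linarith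
      _ = M := by ring
  apply le_antisymm
  · apply Real.sSup_le hub hM0
  · -- M ≤ sSup: each f j is attained
    apply ciSup_le
    intro j
    apply le_csSup ⟨M, hub⟩
    refine ⟨fun i => if i = j then 1 else 0, fun i => if i = j then 1 else 0, ?_, ?_, ?_⟩
    · simp [Finset.sum_ite_eq']
    · simp [Finset.sum_ite_eq']
    · rw [Finset.sum_eq_single j]
      · simp; ring
      · intro i _ hij; simp [hij]
      · intro h; exact absurd (Finset.mem_univ j) h
end

section
/- Let σ₁,…,σ_p ∈ [0,1] and p < p'. Suppose there exists an index i with (1−σ_i)(1+σ_i)² ≥ 1. Then sup over β ∈ ℝ^p, β' ∈ ℝ^{p'} with ‖β‖₂ ≤ 1, ‖β'‖₂ ≤ 1 of ∑_{j=1}^p (1−σ_j²)(β_j² + β'_j² + 2σ_j β_j β'_j) + ∑_{k=p+1}^{p'} β'_k² equals max_{j=1,…,p} 2(1−σ_j)(1+σ_j)². -/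
open BigOperators

lemma sum_split_td {p p' : ℕ} (hp : p ≤ p') (g : Fin p' → ℝ) :
    ∑ k : Fin p', g k =
      (∑ j : Fin p, g (Fin.castLE hp j)) +
      ∑ k ∈ Finset.univ.filter (fun k : Fin p' => p ≤ (k : ℕ)), g k := by
  have hmap : (Finset.univ.map (Fin.castLEEmb hp))
      = Finset.univ.filter (fun k : Fin p' => (k : ℕ) < p) := by
    ext k
    simp only [Finset.mem_map, Finset.mem_univ, true_and, Finset.mem_filter,
      Fin.castLEEmb_apply]
    constructor
    · rintro ⟨j, rfl⟩; exact j.isLt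
    · intro h; exact ⟨⟨(k : ℕ), h⟩, by ext; simp⟩
  have h1 : (∑ j : Fin p, g (Fin.castLE hp j))
      = ∑ k ∈ Finset.univ.filter (fun k : Fin p' => (k : ℕ) < p), g k := by
    rw [← hmap, Finset.sum_map]; rfl
  rw [h1, ← Finset.sum_filter_add_sum_filter_not Finset.univ
    (fun k : Fin p' => (k : ℕ) < p) g]
  congr 1
  apply Finset.sum_congr
  · ext k; simp [not_lt]
  · intros; rfl

/-- the case `p < p'` of the supremum of the TD quadratic form,
assuming some index satisfies `(1−σ_i)(1+σ_i)² ≥ 1`. -/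
theorem td_sup_representative_task_set_rect (p p' : ℕ) (hp : p < p')
    (σ : Fin p → ℝ) (hσ : ∀ j, σ j ∈ Set.Icc (0 : ℝ) 1)
    (hex : ∃ i : Fin p, 1 ≤ (1 - σ i) * (1 + σ i) ^ 2) :
    sSup {v : ℝ | ∃ (β : Fin p → ℝ) (β' : Fin p' → ℝ),
        (∑ j : Fin p, (β j) ^ 2) ≤ 1 ∧ (∑ k : Fin p', (β' k) ^ 2) ≤ 1 ∧
        v = (∑ j : Fin p, (1 - σ j ^ 2) *
              ((β j) ^ 2 + (β' (Fin.castLE hp.le j)) ^ 2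
                + 2 * σ j * β j * β' (Fin.castLE hp.le j)))
            + ∑ k ∈ Finset.univ.filter (fun k : Fin p' => p ≤ (k : ℕ)), (β' k) ^ 2}
      = ⨆ j : Fin p, 2 * (1 - σ j) * (1 + σ j) ^ 2 := by
  obtain ⟨i0, hi0⟩ := hex
  haveI : Nonempty (Fin p) := ⟨i0⟩
  set f : Fin p → ℝ := fun j => 2 * (1 - σ j) * (1 + σ j) ^ 2 with hf
  obtain ⟨j0, hj0⟩ := Finite.exists_max f
  have hbdd : BddAbove (Set.range f) := Set.Finite.bddAbove (Set.finite_range f)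
  have hM : (⨆ j : Fin p, f j) = f j0 := by
    apply le_antisymm (ciSup_le hj0) (le_ciSup hbdd j0)
  have hM2 : 2 ≤ f j0 := by
    have := hj0 i0
    simp only [hf] at this ⊢
    nlinarith [hi0]
  rw [hM]
  apply IsGreatest.csSup_eq
  constructor
  · -- f j0 is attained
    refine ⟨fun j => if j = j0 then 1 else 0,
      fun k => if k = Fin.castLE hp.le j0 then 1 else 0, ?_, ?_, ?_⟩
    · have : ∀ j : Fin p, ((if j = j0 then (1:ℝ) else 0))^2 = if j = j0 then 1 else 0 := by
        intro j; split <;> norm_num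
      simp only [this, Finset.sum_ite_eq', Finset.mem_univ, if_true]
      exact le_refl 1
    · have : ∀ k : Fin p', ((if k = Fin.castLE hp.le j0 then (1:ℝ) else 0))^2
          = if k = Fin.castLE hp.le j0 then 1 else 0 := by
        intro k; split <;> norm_num
      simp only [this, Finset.sum_ite_eq', Finset.mem_univ, if_true]
      exact le_refl 1
    · have hterm : ∀ j : Fin p, (1 - σ j ^ 2) *
          ((if j = j0 then (1:ℝ) else 0) ^ 2
            + (if Fin.castLE hp.le j = Fin.castLE hp.le j0 then (1:ℝ) else 0) ^ 2
            + 2 * σ j * (if j = j0 then (1:ℝ) else 0)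
              * (if Fin.castLE hp.le j = Fin.castLE hp.le j0 then (1:ℝ) else 0))
          = if j = j0 then f j0 else 0 := by
        intro j
        rcases eq_or_ne j j0 with rfl | h
        · simp [hf]; ring
        · have h' : Fin.castLE hp.le j ≠ Fin.castLE hp.le j0 := by
            intro hc; exact h (Fin.castLE_injective hp.le hc)
          simp [h, h']
      have hz : ∀ k ∈ Finset.univ.filter (fun k : Fin p' => p ≤ (k : ℕ)),
          ((if k = Fin.castLE hp.le j0 then (1:ℝ) else 0))^2 = 0 := by
        intro k hk
        simp only [Finset.mem_filter, Finset.mem_univ, true_and] at hk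
        have : k ≠ Fin.castLE hp.le j0 := by
          intro hc
          have : (k : ℕ) = (j0 : ℕ) := by rw [hc]; rfl
          omega
        simp [this]
      simp only [hterm, Finset.sum_ite_eq', Finset.mem_univ, if_true,
        Finset.sum_congr rfl hz, Finset.sum_const_zero, add_zero]
  · -- upper bound
    rintro v ⟨β, β', hβ, hβ', rfl⟩
    set M := f j0 with hMdef
    have hM1 : (1:ℝ) ≤ M / 2 := by linarith
    have hterm : ∀ j : Fin p, (1 - σ j ^ 2) *
        ((β j) ^ 2 + (β' (Fin.castLE hp.le j)) ^ 2
          + 2 * σ j * β j * β' (Fin.castLE hp.le j))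
        ≤ (M / 2) * ((β j)^2 + (β' (Fin.castLE hp.le j))^2) := by
      intro j
      obtain ⟨h0, h1⟩ := hσ j
      have hfj : 2 * (1 - σ j) * (1 + σ j)^2 ≤ M := hj0 j
      set a := β j
      set b := β' (Fin.castLE hp.le j)
      have key : (1 - σ j ^ 2) * (a^2 + b^2 + 2 * σ j * a * b)
          ≤ (1 - σ j) * (1 + σ j)^2 * (a^2 + b^2) := by
        nlinarith [sq_nonneg (a - b), mul_nonneg (mul_nonneg h0 (sub_nonneg.2 h1))
          (sq_nonneg (a - b)), sq_nonneg (a + b), mul_nonneg h0 (sq_nonneg (a - b))]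
      have h2 : (1 - σ j) * (1 + σ j)^2 * (a^2 + b^2) ≤ (M/2) * (a^2 + b^2) := by
        apply mul_le_mul_of_nonneg_right _ (by positivity)
        linarith
      linarith
    have hfilter : ∀ k ∈ Finset.univ.filter (fun k : Fin p' => p ≤ (k : ℕ)),
        (β' k)^2 ≤ (M/2) * (β' k)^2 := by
      intro k _
      nlinarith [sq_nonneg (β' k)]
    have hsplit := sum_split_td hp.le (fun k => (β' k)^2)
    have hsum1 : (∑ j : Fin p, (1 - σ j ^ 2) *
        ((β j) ^ 2 + (β' (Fin.castLE hp.le j)) ^ 2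
          + 2 * σ j * β j * β' (Fin.castLE hp.le j)))
        ≤ ∑ j : Fin p, (M/2) * ((β j)^2 + (β' (Fin.castLE hp.le j))^2) :=
      Finset.sum_le_sum (fun j _ => hterm j)
    have hsum2 : (∑ k ∈ Finset.univ.filter (fun k : Fin p' => p ≤ (k : ℕ)), (β' k)^2)
        ≤ ∑ k ∈ Finset.univ.filter (fun k : Fin p' => p ≤ (k : ℕ)), (M/2) * (β' k)^2 :=
      Finset.sum_le_sum hfilter
    have e1 : ∑ j : Fin p, (M/2) * ((β j)^2 + (β' (Fin.castLE hp.le j))^2)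
        = (M/2) * (∑ j : Fin p, (β j)^2) + (M/2) * (∑ j : Fin p, (β' (Fin.castLE hp.le j))^2) := by
      rw [Finset.sum_congr rfl (fun j _ => mul_add (M/2) ((β j)^2) ((β' (Fin.castLE hp.le j))^2)),
        Finset.sum_add_distrib, ← Finset.mul_sum, ← Finset.mul_sum]
    have e2 : ∑ k ∈ Finset.univ.filter (fun k : Fin p' => p ≤ (k : ℕ)), (M/2) * (β' k)^2
        = (M/2) * ∑ k ∈ Finset.univ.filter (fun k : Fin p' => p ≤ (k : ℕ)), (β' k)^2 := by
      rw [Finset.mul_sum]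
    have hb'sum : (∑ j : Fin p, (β' (Fin.castLE hp.le j))^2)
        + (∑ k ∈ Finset.univ.filter (fun k : Fin p' => p ≤ (k : ℕ)), (β' k)^2) ≤ 1 := by
      rw [← hsplit]; exact hβ'
    have hMpos : 0 ≤ M / 2 := by linarith
    have hb'nonneg : 0 ≤ ∑ j : Fin p, (β' (Fin.castLE hp.le j))^2 :=
      Finset.sum_nonneg (fun j _ => sq_nonneg _)
    have hfnonneg : 0 ≤ ∑ k ∈ Finset.univ.filter (fun k : Fin p' => p ≤ (k : ℕ)), (β' k)^2 :=
      Finset.sum_nonneg (fun k _ => sq_nonneg _)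
    nlinarith [hsum1, hsum2, e1, e2, hb'sum, hβ, hMpos,
      Finset.sum_nonneg (fun j (_ : j ∈ Finset.univ) => sq_nonneg (β j))]
end

section
/- Let σ₁ ≥ … ≥ σ_p ≥ 0 be real numbers in [0,1] and 1 ≤ r ≤ p. Then sup over β, β' ∈ ℝ^p with ‖β‖₂ ≤ 1, ‖β'‖₂ ≤ 1 and β_j = β'_j = 0 for all j > r of ∑_{j=1}^p (1−σ_j²)(β_j² + β'_j² + 2σ_j β_j β'_j) equals max_{j=1,…,r} 2(1−σ_j)(1+σ_j)². -/
open BigOperators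

/-- the supremum of the TD quadratic form over the restricted task
set (only the first `r` coordinates may be nonzero) equals
`max_{j ≤ r} 2(1−σ_j)(1+σ_j)²`. -/
theorem td_sup_restricted_task_set (p r : ℕ) (hr1 : 1 ≤ r) (hrp : r ≤ p)
    (σ : Fin p → ℝ) (hσ : ∀ j, σ j ∈ Set.Icc (0 : ℝ) 1)
    (hσmono : Antitone σ) :
    sSup {v : ℝ | ∃ β β' : Fin p → ℝ,
        (∑ j : Fin p, (β j) ^ 2) ≤ 1 ∧ (∑ j : Fin p, (β' j) ^ 2) ≤ 1 ∧
        (∀ j : Fin p, r ≤ (j : ℕ) → β j = 0 ∧ β' j = 0) ∧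
        v = ∑ j : Fin p, (1 - σ j ^ 2) *
              ((β j) ^ 2 + (β' j) ^ 2 + 2 * σ j * β j * β' j)}
      = ⨆ j : Fin r, 2 * (1 - σ (Fin.castLE hrp j)) * (1 + σ (Fin.castLE hrp j)) ^ 2 := by
  have hne : Nonempty (Fin r) := ⟨⟨0, hr1⟩⟩
  set f : Fin r → ℝ := fun j => 2 * (1 - σ (Fin.castLE hrp j)) * (1 + σ (Fin.castLE hrp j)) ^ 2
    with hf
  obtain ⟨j0, hj0⟩ := Finite.exists_max f
  have hMeq : (⨆ j : Fin r, f j) = f j0 :=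
    le_antisymm (ciSup_le hj0) (le_ciSup (Set.Finite.bddAbove (Set.finite_range _)) j0)
  have hf0 : ∀ j : Fin r, 0 ≤ f j := by
    intro j
    have h := hσ (Fin.castLE hrp j)
    simp only [hf]
    nlinarith [sq_nonneg (1 + σ (Fin.castLE hrp j)), h.1, h.2]
  have hM0 : 0 ≤ f j0 := hf0 j0
  rw [hMeq]
  apply IsGreatest.csSup_eq
  set a : Fin p := Fin.castLE hrp j0 with ha
  constructor
  · -- membership: take β = β' = e_a
    refine ⟨(fun j => if j = a then 1 else 0), (fun j => if j = a then 1 else 0), ?_, ?_, ?_, ?_⟩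
    · have : ∀ j : Fin p, ((if j = a then (1:ℝ) else 0)) ^ 2 = if j = a then 1 else 0 := by
        intro j; split <;> norm_num
      simp only [this, Finset.sum_ite_eq', Finset.mem_univ, if_true]; exact le_refl 1
    · have : ∀ j : Fin p, ((if j = a then (1:ℝ) else 0)) ^ 2 = if j = a then 1 else 0 := by
        intro j; split <;> norm_num
      simp only [this, Finset.sum_ite_eq', Finset.mem_univ, if_true]; exact le_refl 1
    · intro j hj
      have : j ≠ a := by
        intro h
        have : (j : ℕ) = j0 := by rw [h, ha]; rfl
        omega
      simp [this]
    · rw [Finset.sum_eq_single a]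
      · have h1 : (if a = a then (1:ℝ) else 0) = 1 := if_pos rfl
        beta_reduce
        rw [h1]; simp only [hf]; ring
      · intro b _ hb
        simp [hb]
      · intro h; exact absurd (Finset.mem_univ a) h
  · -- upper bound
    rintro v ⟨β, β', hβ, hβ', hzero, rfl⟩
    have key : ∀ j : Fin p, (1 - σ j ^ 2) * ((β j) ^ 2 + (β' j) ^ 2 + 2 * σ j * β j * β' j)
        ≤ (f j0 / 2) * ((β j) ^ 2 + (β' j) ^ 2) := by
      intro j
      by_cases hjr : r ≤ (j : ℕ)
      · obtain ⟨h1, h2⟩ := hzero j hjr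
        simp [h1, h2]
      · push_neg at hjr
        set j' : Fin r := ⟨(j : ℕ), hjr⟩ with hj'
        have hcast : Fin.castLE hrp j' = j := by ext; rfl
        have hle : 2 * (1 - σ j) * (1 + σ j) ^ 2 ≤ f j0 := by
          have h2 := hj0 j'
          simpa [hf, hcast] using h2
        have h := hσ j
        have h1σ2 : (0:ℝ) ≤ 1 - σ j ^ 2 := by nlinarith [h.1, h.2]
        nlinarith [mul_nonneg (mul_nonneg h.1 h1σ2) (sq_nonneg (β j - β' j)),
          mul_nonneg (sub_nonneg.2 hle) (add_nonneg (sq_nonneg (β j)) (sq_nonneg (β' j)))]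
    calc ∑ j : Fin p, (1 - σ j ^ 2) * ((β j) ^ 2 + (β' j) ^ 2 + 2 * σ j * β j * β' j)
        ≤ ∑ j : Fin p, (f j0 / 2) * ((β j) ^ 2 + (β' j) ^ 2) :=
          Finset.sum_le_sum fun j _ => key j
      _ = (f j0 / 2) * ((∑ j : Fin p, (β j) ^ 2) + ∑ j : Fin p, (β' j) ^ 2) := by
          rw [← Finset.sum_add_distrib, Finset.mul_sum]
      _ ≤ (f j0 / 2) * 2 := by
          apply mul_le_mul_of_nonneg_left _ (by linarith)
          linarith
      _ = f j0 := by ring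
end

section
/- Let A ∈ ℝ^{n×n} be symmetric positive semidefinite with eigenvalues 0 ≤ λ₁ ≤ … ≤ λ_n, let ε ≥ 0, and let k be the largest integer such that λ₁ + … + λ_k ≤ kε. If v₁,…,v_m ∈ ℝ^n are orthonormal vectors with v_i A v_iᵀ ≤ ε for all i = 1,…,m, then m ≤ k. -/
/-!
Write `A = U diag(λ) Uᵀ` and let `c_j = ∑ᵢ ⟨vᵢ, u_j⟩²`, where `u_j` is the `j`-th column of `U`.
Then `∑ᵢ vᵢᵀ A vᵢ = ∑ⱼ λⱼ c_j ≤ mε`. Each `c_j ≤ 1` by Bessel's inequality, and `∑ⱼ c_j = m`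
because `U` preserves the norm of every `vᵢ`. Among weights in `[0, 1]` of total mass `m`, the sum
`∑ⱼ λⱼ c_j` is smallest when the mass sits on the `m` smallest eigenvalues, so
`λ₁ + … + λ_m ≤ mε`, and maximality of `k` gives `m ≤ k`.
-/

open Matrix Finset

theorem Fin.exists_cut_of_monotone {α : Type*} [ConditionallyCompleteLattice α] {n : ℕ}
    {f : Fin n → α} (hf : Monotone f) (m : ℕ) :
    ∃ t, ∀ j : Fin n, ((j : ℕ) < m → f j ≤ t) ∧ (m ≤ (j : ℕ) → t ≤ f j) := by
  by_cases hm : m < n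
  · exact ⟨f ⟨m, hm⟩, fun j =>
      ⟨fun hj => hf (show j ≤ ⟨m, hm⟩ from hj.le),
        fun hj => hf (show (⟨m, hm⟩ : Fin n) ≤ j from hj)⟩⟩
  · exact ⟨⨆ j, f j, fun j =>
      ⟨fun _ => le_ciSup (Finite.bddAbove_range f) j, fun hj => absurd j.isLt (by omega)⟩⟩

theorem Fin.sum_filter_val_lt_le_sum_mul_of_monotone {n m : ℕ} (hmn : m ≤ n)
    {lam c : Fin n → ℝ} (hlam : Monotone lam) (hc0 : ∀ j, 0 ≤ c j) (hc1 : ∀ j, c j ≤ 1)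
    (hcs : ∑ j, c j = m) :
    ∑ j ∈ univ.filter (fun j : Fin n => (j : ℕ) < m), lam j ≤ ∑ j, lam j * c j := by
  obtain ⟨t, ht⟩ := Fin.exists_cut_of_monotone hlam m
  set b : Fin n → ℝ := fun j => if (j : ℕ) < m then 1 else 0
  have hb : ∑ j, b j = m := by simp [b, sum_boole, Fin.card_filter_val_lt, hmn]
  have hcross : ∀ j, 0 ≤ (lam j - t) * (c j - b j) := by
    intro j
    by_cases hj : (j : ℕ) < m
    · simp only [b, hj, if_true]
      exact mul_nonneg_of_nonpos_of_nonpos (by linarith [(ht j).1 hj]) (by linarith [hc1 j])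
    · simp only [b, hj, if_false, sub_zero]
      exact mul_nonneg (by linarith [(ht j).2 (not_lt.mp hj)]) (hc0 j)
  calc ∑ j ∈ univ.filter (fun j : Fin n => (j : ℕ) < m), lam j = ∑ j, lam j * b j := by
        simp [b, sum_filter]
    _ ≤ ∑ j, lam j * b j + ∑ j, (lam j - t) * (c j - b j) :=
        le_add_of_nonneg_right (sum_nonneg fun j _ => hcross j)
    _ = ∑ j, lam j * c j := by
        simp only [sub_mul, mul_sub, sum_sub_distrib, ← mul_sum, hcs, hb]
        ring

theorem Matrix.dotProduct_mulVec_mul_diagonal_mul_transpose {n R : Type*} [Fintype n]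
    [DecidableEq n] [CommSemiring R] (U : Matrix n n R) (d x : n → R) :
    x ⬝ᵥ ((U * diagonal d * Uᵀ) *ᵥ x) = ∑ j, d j * (Uᵀ *ᵥ x) j ^ 2 := by
  rw [← mulVec_mulVec, ← mulVec_mulVec, dotProduct_mulVec, ← mulVec_transpose]
  simp only [mulVec_diagonal, dotProduct]
  exact sum_congr rfl fun j _ => by ring

theorem Matrix.transpose_mulVec_dotProduct_self {n R : Type*} [Fintype n] [DecidableEq n]
    [CommSemiring R] {U : Matrix n n R} (hU : U * Uᵀ = 1) (x : n → R) :
    (Uᵀ *ᵥ x) ⬝ᵥ (Uᵀ *ᵥ x) = x ⬝ᵥ x := by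
  rw [dotProduct_mulVec, ← mulVec_transpose, transpose_transpose, mulVec_mulVec, hU, one_mulVec]

section OrthonormalVectors

variable {ι n : Type*} [Fintype n] [DecidableEq ι] {v : ι → n → ℝ}

theorem orthonormal_toLp_of_dotProduct (hv : ∀ i j, v i ⬝ᵥ v j = if i = j then 1 else 0) :
    Orthonormal ℝ (fun i => (WithLp.toLp 2 (v i) : EuclideanSpace ℝ n)) := by
  rw [orthonormal_iff_ite]
  intro i j
  simpa [PiLp.inner_apply, dotProduct, mul_comm] using hv i j

theorem sum_sq_dotProduct_le_of_orthonormal [Fintype ι]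
    (hv : ∀ i j, v i ⬝ᵥ v j = if i = j then 1 else 0) (u : n → ℝ) :
    ∑ i, (v i ⬝ᵥ u) ^ 2 ≤ u ⬝ᵥ u := by
  have hbessel := (orthonormal_toLp_of_dotProduct hv).sum_inner_products_le
    (WithLp.toLp 2 u : EuclideanSpace ℝ n) (s := univ)
  rw [EuclideanSpace.norm_sq_eq] at hbessel
  simpa [PiLp.inner_apply, dotProduct, mul_comm, sq] using hbessel

variable [DecidableEq n] {U : Matrix n n ℝ}

theorem sum_sq_transpose_mulVec_apply_le_one [Fintype ι] (hU : Uᵀ * U = 1)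
    (hv : ∀ i j, v i ⬝ᵥ v j = if i = j then 1 else 0) (j : n) :
    ∑ i, (Uᵀ *ᵥ v i) j ^ 2 ≤ 1 := by
  have hcol : (fun t => U t j) ⬝ᵥ (fun t => U t j) = 1 := by
    have hjj := congrFun (congrFun hU j) j
    rwa [mul_apply', one_apply_eq] at hjj
  simpa [mulVec, dotProduct_comm, hcol] using
    sum_sq_dotProduct_le_of_orthonormal hv (fun t => U t j)

theorem sum_sum_sq_transpose_mulVec_apply [Fintype ι] (hU : Uᵀ * U = 1)
    (hv : ∀ i j, v i ⬝ᵥ v j = if i = j then 1 else 0) :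
    ∑ j, ∑ i, (Uᵀ *ᵥ v i) j ^ 2 = Fintype.card ι := by
  rw [sum_comm]
  have hunit : ∀ i, ∑ j, (Uᵀ *ᵥ v i) j ^ 2 = 1 := fun i => by
    simp only [sq, ← dotProduct.eq_1, transpose_mulVec_dotProduct_self (mul_eq_one_comm.mp hU),
      hv i i, if_true]
  simp [hunit]

end OrthonormalVectors

theorem orthonormal_small_quadform_count_bound_general (n m k : ℕ)
    (A : Matrix (Fin n) (Fin n) ℝ)
    (lam : Fin n → ℝ) (hlam_mono : Monotone lam)
    (hdiag : ∃ U : Matrix (Fin n) (Fin n) ℝ,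
      Uᵀ * U = 1 ∧ A = U * Matrix.diagonal lam * Uᵀ)
    (ε : ℝ)
    (hk_max : ∀ k' : ℕ, k' ≤ n →
      (∑ i ∈ Finset.univ.filter (fun i : Fin n => (i : ℕ) < k'), lam i)
          ≤ (k' : ℝ) * ε → k' ≤ k)
    (v : Fin m → (Fin n → ℝ))
    (hortho : ∀ i j : Fin m, v i ⬝ᵥ v j = if i = j then 1 else 0)
    (hsmall : ∀ i : Fin m, v i ⬝ᵥ (A *ᵥ v i) ≤ ε) :
    m ≤ k := by
  obtain ⟨U, hU, rfl⟩ := hdiag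
  have hmn : m ≤ n := by
    simpa using (orthonormal_toLp_of_dotProduct hortho).linearIndependent.fintype_card_le_finrank
  refine hk_max m hmn ?_
  calc ∑ j ∈ univ.filter (fun j : Fin n => (j : ℕ) < m), lam j
      ≤ ∑ j, lam j * ∑ i, (Uᵀ *ᵥ v i) j ^ 2 :=
        Fin.sum_filter_val_lt_le_sum_mul_of_monotone hmn hlam_mono
          (fun j => sum_nonneg fun i _ => sq_nonneg _)
          (sum_sq_transpose_mulVec_apply_le_one hU hortho)
          (by simpa using sum_sum_sq_transpose_mulVec_apply hU hortho)
    _ = ∑ i, v i ⬝ᵥ ((U * diagonal lam * Uᵀ) *ᵥ v i) := by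
        simp only [dotProduct_mulVec_mul_diagonal_mul_transpose, mul_sum]
        exact sum_comm
    _ ≤ ∑ _i : Fin m, ε := sum_le_sum fun i _ => hsmall i
    _ = m * ε := by simp

/-- Lemma B.2: let `A` be symmetric PSD with eigenvalues
`λ₁ ≤ … ≤ λ_n` (witnessed by an orthogonal diagonalization), `ε ≥ 0`, and `k`
the largest integer with `λ₁ + … + λ_k ≤ k ε`.  If `v₁,…,v_m` are orthonormal
with `vᵢ A vᵢᵀ ≤ ε` for each `i`, then `m ≤ k`. -/
theorem orthonormal_small_quadform_count_bound (n m k : ℕ)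
    (A : Matrix (Fin n) (Fin n) ℝ) (hA : A.PosSemidef)
    (lam : Fin n → ℝ) (hlam_mono : Monotone lam)
    (hdiag : ∃ U : Matrix (Fin n) (Fin n) ℝ,
      Uᵀ * U = 1 ∧ A = U * Matrix.diagonal lam * Uᵀ)
    (ε : ℝ) (hε : 0 ≤ ε)
    (hk : (∑ i ∈ Finset.univ.filter (fun i : Fin n => (i : ℕ) < k), lam i)
            ≤ (k : ℝ) * ε)
    (hk_max : ∀ k' : ℕ, k' ≤ n →
      (∑ i ∈ Finset.univ.filter (fun i : Fin n => (i : ℕ) < k'), lam i)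
          ≤ (k' : ℝ) * ε → k' ≤ k)
    (v : Fin m → (Fin n → ℝ))
    (hortho : ∀ i j : Fin m, v i ⬝ᵥ v j = if i = j then 1 else 0)
    (hsmall : ∀ i : Fin m, v i ⬝ᵥ (A *ᵥ v i) ≤ ε) :
    m ≤ k :=
  orthonormal_small_quadform_count_bound_general n m k A lam hlam_mono hdiag ε hk_max v hortho
    hsmall
end

section
/- Let D ∈ ℝ^{p×p'} (p ≤ p') have singular values σ₁ ≥ … ≥ σ_p, and let α, α' be independent and uniformly distributed on the unit balls of ℝ^p and ℝ^{p'} respectively. Then E[α(I_p − DDᵀ)αᵀ + α'(I_{p'} − DᵀD)α'ᵀ + 2α(D − DDᵀD)α'ᵀ] = (p − ∑_j σ_j²)/(p+2) + (p' − ∑_j σ_j²)/(p'+2). -/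
/-!
Only the first and second moments of the uniform distribution on the ball enter. The ball and
Lebesgue measure are invariant under every orthogonal map `x ↦ Q x`: the central symmetry kills
the mean, a reflection in one coordinate kills `E[xᵢ xⱼ]` for `i ≠ j`, and a transposition of
coordinates makes all `E[xᵢ²]` equal. Their sum `E‖x‖²` equals `n / (n + 2)` by integrating in polar
coordinates, so `E[x ⬝ Ax] = tr A / (n + 2)`. The cross term has mean zero in `α'`, and by the
singular value decomposition `tr (D Dᵀ) = tr (Dᵀ D) = ∑ σⱼ²`.
-/

open Matrix MeasureTheory ProbabilityTheory

theorem MeasureTheory.MeasurePreserving.cond_preimage {α β : Type*} [MeasurableSpace α]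
    [MeasurableSpace β] {μ : Measure α} {ν : Measure β} {e : α → β}
    (he : MeasurePreserving e μ ν) (he' : MeasurableEmbedding e) (s : Set β) :
    MeasurePreserving e μ[|e ⁻¹' s] ν[|s] := by
  unfold ProbabilityTheory.cond
  rw [he.measure_preimage_emb he' s]
  exact (he.restrict_preimage_emb he' s).smul_measure _

theorem ContinuousOn.integrable_cond {X E : Type*} [MeasurableSpace X] [TopologicalSpace X]
    [OpensMeasurableSpace X] [T2Space X] [NormedAddCommGroup E] {μ : Measure X}
    [IsFiniteMeasureOnCompacts μ] {s : Set X} {f : X → E} (hs : IsCompact s)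
    (hf : ContinuousOn f s) : Integrable f μ[|s] := by
  by_cases h : μ s = 0
  · simp [cond_eq_zero_of_meas_eq_zero h]
  · exact (hf.integrableOn_compact hs).smul_measure (ENNReal.inv_ne_top.mpr h)

theorem integral_norm_pow_cond_closedBall {E : Type*} [NormedAddCommGroup E] [NormedSpace ℝ E]
    [MeasurableSpace E] [BorelSpace E] [FiniteDimensional ℝ E] [Nontrivial E]
    (μ : Measure E) [μ.IsAddHaarMeasure] (k : ℕ) :
    ∫ x, ‖x‖ ^ k ∂μ[|Metric.closedBall 0 1] =
      Module.finrank ℝ E / (Module.finrank ℝ E + k) := by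
  set d := Module.finrank ℝ E
  have hd : 0 < d := Module.finrank_pos
  have hradial : ∫ r in Set.Ioi (0 : ℝ), r ^ (d - 1) • (Set.Iic 1).indicator (· ^ k) r =
      1 / (d + k) := by
    have h : ∀ r : ℝ, r ^ (d - 1) • (Set.Iic 1).indicator (· ^ k) r =
        (Set.Iic 1).indicator (· ^ (d - 1 + k)) r := by
      intro r
      simp only [Set.indicator_apply, smul_eq_mul, mul_ite, mul_zero, pow_add]
    simp_rw [h]
    rw [setIntegral_indicator measurableSet_Iic, Set.Ioi_inter_Iic,
      ← intervalIntegral.integral_of_le zero_le_one, integral_pow, one_pow,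
      zero_pow (Nat.succ_ne_zero _), sub_zero, ← Nat.cast_succ, Nat.succ_eq_add_one,
      show d - 1 + k + 1 = d + k by omega]
    push_cast
    rfl
  have hball : ∫ x in Metric.closedBall (0 : E) 1, ‖x‖ ^ k ∂μ =
      ∫ x, (Set.Iic 1).indicator (· ^ k) ‖x‖ ∂μ := by
    rw [← integral_indicator Metric.isClosed_closedBall.measurableSet]
    refine integral_congr_ae (Filter.Eventually.of_forall fun x => ?_)
    classical
    simp only [Set.indicator_apply, mem_closedBall_zero_iff, Set.mem_Iic]
  have hvol : (μ (Metric.ball (0 : E) 1)).toReal ≠ 0 :=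
    ENNReal.toReal_ne_zero.mpr ⟨(Metric.measure_ball_pos μ 0 one_pos).ne', measure_ball_lt_top.ne⟩
  rw [ProbabilityTheory.cond, integral_smul_measure, hball, integral_fun_norm_addHaar, hradial,
    Measure.addHaar_closedBall_eq_addHaar_ball]
  simp only [nsmul_eq_mul, smul_eq_mul, measureReal_def, ENNReal.toReal_inv]
  field_simp
  rfl

namespace Matrix

variable {ι : Type*} [Fintype ι] [DecidableEq ι] {Q : Matrix ι ι ℝ}

theorem abs_det_eq_one_of_transpose_mul_self (hQ : Qᵀ * Q = 1) : |Q.det| = 1 := by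
  have h : Q.det ^ 2 = 1 := by simpa [sq] using congrArg det hQ
  exact (pow_left_inj₀ (abs_nonneg _) zero_le_one two_ne_zero).mp (by rw [sq_abs, h, one_pow])

theorem measurePreserving_mulVec (hQ : Qᵀ * Q = 1) :
    MeasurePreserving (Q *ᵥ ·) volume volume := by
  have hdet := abs_det_eq_one_of_transpose_mul_self hQ
  refine ⟨by fun_prop, ?_⟩
  have h := Real.map_matrix_volume_pi_eq_smul_volume_pi (M := Q) (abs_pos.mp (hdet ▸ one_pos))
  rwa [abs_inv, hdet, inv_one, ENNReal.ofReal_one, one_smul] at h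

theorem measurableEmbedding_mulVec (hQ : Qᵀ * Q = 1) : MeasurableEmbedding (Q *ᵥ ·) :=
  Continuous.measurableEmbedding (by fun_prop) <|
    Function.LeftInverse.injective (g := (Qᵀ *ᵥ ·)) fun x => by
      simp only [mulVec_mulVec, hQ, one_mulVec]

theorem mulVec_dotProduct_mulVec_self (hQ : Qᵀ * Q = 1) (x : ι → ℝ) :
    (Q *ᵥ x) ⬝ᵥ (Q *ᵥ x) = x ⬝ᵥ x := by
  rw [dotProduct_mulVec, ← mulVec_transpose, mulVec_mulVec, hQ, one_mulVec]

end Matrix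

section UniformBall

variable (ι : Type*) [Fintype ι]

def unitBall : Set (ι → ℝ) := {x | ∑ k, x k ^ 2 ≤ 1}

noncomputable def uniformBall : Measure (ι → ℝ) := volume[|unitBall ι]

variable {ι}

theorem preimage_ofLp_unitBall :
    (MeasurableEquiv.toLp 2 (ι → ℝ)).symm ⁻¹' unitBall ι = Metric.closedBall 0 1 := by
  ext y
  simp [unitBall, ← sq_le_one_iff₀ (norm_nonneg y), EuclideanSpace.norm_sq_eq]

theorem measurePreserving_ofLp_uniformBall :
    MeasurePreserving (MeasurableEquiv.toLp 2 (ι → ℝ)).symm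
      volume[|Metric.closedBall 0 1] (uniformBall ι) := by
  rw [← preimage_ofLp_unitBall]
  exact (EuclideanSpace.volume_preserving_symm_measurableEquiv_toLp ι).cond_preimage
    (MeasurableEquiv.measurableEmbedding _) _

instance : IsProbabilityMeasure (uniformBall ι) := by
  have : IsProbabilityMeasure volume[|Metric.closedBall (0 : EuclideanSpace ℝ ι) 1] :=
    cond_isProbabilityMeasure_of_finite (Metric.measure_closedBall_pos _ _ one_pos).ne'
      measure_closedBall_lt_top.ne
  rw [← measurePreserving_ofLp_uniformBall.map_eq]
  exact Measure.isProbabilityMeasure_map (by fun_prop)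

theorem integrable_uniformBall {f : (ι → ℝ) → ℝ} (hf : Continuous f) :
    Integrable f (uniformBall ι) := by
  rw [← measurePreserving_ofLp_uniformBall.integrable_comp_emb
    (MeasurableEquiv.measurableEmbedding _)]
  exact (hf.comp (PiLp.continuous_ofLp 2 _)).continuousOn.integrable_cond
    (isCompact_closedBall 0 1)

theorem integral_sum_sq_uniformBall [Nonempty ι] :
    ∫ x, ∑ k, x k ^ 2 ∂uniformBall ι = Fintype.card ι / (Fintype.card ι + 2) := by
  rw [← measurePreserving_ofLp_uniformBall.integral_comp (MeasurableEquiv.measurableEmbedding _)]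
  simpa [EuclideanSpace.norm_sq_eq, finrank_euclideanSpace] using
    integral_norm_pow_cond_closedBall (volume : Measure (EuclideanSpace ℝ ι)) 2

variable [DecidableEq ι]

theorem integral_comp_mulVec_uniformBall {Q : Matrix ι ι ℝ} (hQ : Qᵀ * Q = 1)
    (f : (ι → ℝ) → ℝ) : ∫ x, f (Q *ᵥ x) ∂uniformBall ι = ∫ x, f x ∂uniformBall ι := by
  have hball : (Q *ᵥ ·) ⁻¹' unitBall ι = unitBall ι := by
    ext x
    simpa [unitBall, dotProduct, sq] using
      congrArg (· ≤ (1 : ℝ)) (mulVec_dotProduct_mulVec_self hQ x)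
  have h := (measurePreserving_mulVec hQ).cond_preimage (measurableEmbedding_mulVec hQ)
    (unitBall ι)
  rw [hball] at h
  exact h.integral_comp (measurableEmbedding_mulVec hQ) f

theorem integral_uniformBall_eq_zero_of_odd {Q : Matrix ι ι ℝ} (hQ : Qᵀ * Q = 1)
    {f : (ι → ℝ) → ℝ} (hf : ∀ x, f (Q *ᵥ x) = -f x) : ∫ x, f x ∂uniformBall ι = 0 := by
  have h := integral_comp_mulVec_uniformBall hQ f
  simp only [hf, integral_neg] at h
  linarith

theorem integral_dotProduct_uniformBall (c : ι → ℝ) : ∫ x, c ⬝ᵥ x ∂uniformBall ι = 0 :=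
  integral_uniformBall_eq_zero_of_odd (Q := -1) (by simp) fun x => by simp [neg_mulVec]

theorem integral_mul_uniformBall_of_ne {i j : ι} (hij : i ≠ j) :
    ∫ x, x i * x j ∂uniformBall ι = 0 := by
  refine integral_uniformBall_eq_zero_of_odd (Q := diagonal fun k => if k = i then -1 else 1)
    ?_ fun x => ?_
  · rw [diagonal_transpose, diagonal_mul_diagonal, ← diagonal_one]
    congr 1 with k
    split_ifs <;> norm_num
  · simp [mulVec_diagonal, Ne.symm hij]

theorem integral_sq_uniformBall_eq (i j : ι) :
    ∫ x, x i ^ 2 ∂uniformBall ι = ∫ x, x j ^ 2 ∂uniformBall ι := by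
  have hQ : ((Equiv.swap i j).permMatrix ℝ)ᵀ * (Equiv.swap i j).permMatrix ℝ = 1 := by
    simp [← permMatrix_mul]
  rw [← integral_comp_mulVec_uniformBall hQ]
  simp [permMatrix_mulVec]

theorem integral_sq_uniformBall (i : ι) :
    ∫ x, x i ^ 2 ∂uniformBall ι = 1 / (Fintype.card ι + 2) := by
  have : Nonempty ι := ⟨i⟩
  have hsum := integral_sum_sq_uniformBall (ι := ι)
  rw [integral_finsetSum _ fun k _ => integrable_uniformBall (by fun_prop)] at hsum
  simp only [integral_sq_uniformBall_eq _ i, Finset.sum_const, Finset.card_univ,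
    nsmul_eq_mul] at hsum
  have hcard : (Fintype.card ι : ℝ) ≠ 0 := by positivity
  field_simp at hsum ⊢
  linarith

theorem integral_mul_uniformBall (i j : ι) :
    ∫ x, x i * x j ∂uniformBall ι = if i = j then 1 / (Fintype.card ι + 2 : ℝ) else 0 := by
  split_ifs with hij
  · subst hij
    simp_rw [← sq]
    exact integral_sq_uniformBall i
  · exact integral_mul_uniformBall_of_ne hij

theorem integral_dotProduct_mulVec_self_uniformBall (A : Matrix ι ι ℝ) :
    ∫ x, x ⬝ᵥ (A *ᵥ x) ∂uniformBall ι = A.trace / (Fintype.card ι + 2) := by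
  have hexpand : ∀ x : ι → ℝ, x ⬝ᵥ (A *ᵥ x) = ∑ i, ∑ j, A i j * (x i * x j) := by
    intro x
    simp only [dotProduct, mulVec, Finset.mul_sum]
    exact Finset.sum_congr rfl fun i _ => Finset.sum_congr rfl fun j _ => by ring
  have hint : ∀ i j, Integrable (fun x : ι → ℝ => A i j * (x i * x j)) (uniformBall ι) :=
    fun i j => integrable_uniformBall (by fun_prop)
  simp_rw [hexpand]
  rw [integral_finsetSum _ fun i _ => integrable_finsetSum _ fun j _ => hint i j]
  simp_rw [integral_finsetSum _ fun j _ => hint _ j, integral_const_mul, integral_mul_uniformBall]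
  simp [trace, Finset.sum_mul, div_eq_mul_inv]

end UniformBall

section SingularValues

variable {R : Type*} [CommSemiring R]

def rectDiagonal {m n : ℕ} (σ : Fin m → R) : Matrix (Fin m) (Fin n) R :=
  of fun i j => if (i : ℕ) = j then σ i else 0

theorem trace_rectDiagonal_mul_transpose {m n : ℕ} (hmn : m ≤ n) (σ : Fin m → R) :
    trace ((rectDiagonal σ : Matrix (Fin m) (Fin n) R) *
      (rectDiagonal σ : Matrix (Fin m) (Fin n) R)ᵀ) = ∑ i, σ i ^ 2 := by
  refine Finset.sum_congr rfl fun i _ => ?_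
  rw [diag_apply, mul_apply, Finset.sum_eq_single (Fin.castLE hmn i)]
  · simp [rectDiagonal, sq]
  · intro j _ hj
    have : (i : ℕ) ≠ j := fun h => hj (Fin.ext h.symm)
    simp [rectDiagonal, this]
  · simp

theorem trace_mul_transpose_of_orthogonal {m n : Type*} [Fintype m] [Fintype n] [DecidableEq m]
    [DecidableEq n] {U : Matrix m m R} {V : Matrix n n R} (hU : Uᵀ * U = 1) (hV : Vᵀ * V = 1)
    (S : Matrix m n R) : ((U * S * Vᵀ) * (U * S * Vᵀ)ᵀ).trace = (S * Sᵀ).trace := by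
  calc ((U * S * Vᵀ) * (U * S * Vᵀ)ᵀ).trace = (U * (S * (Vᵀ * V) * Sᵀ) * Uᵀ).trace := by
        simp only [transpose_mul, transpose_transpose, Matrix.mul_assoc]
    _ = ((Uᵀ * U) * (S * Sᵀ)).trace := by
        rw [trace_mul_comm, hV, Matrix.mul_one, Matrix.mul_assoc]
    _ = (S * Sᵀ).trace := by rw [hU, Matrix.one_mul]

end SingularValues

theorem expected_td_quadform_uniform_balls_general (p p' : ℕ) (hp : p ≤ p')
    (D : Matrix (Fin p) (Fin p') ℝ)
    (U : Matrix (Fin p) (Fin p) ℝ) (V : Matrix (Fin p') (Fin p') ℝ)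
    (σ : Fin p → ℝ) (hU : Uᵀ * U = 1) (hV : Vᵀ * V = 1)
    (hD : D = U * (Matrix.of fun (i : Fin p) (j : Fin p') =>
      if (i : ℕ) = (j : ℕ) then σ i else 0) * Vᵀ) :
    (∫ α : Fin p → ℝ,
      ∫ α' : Fin p' → ℝ,
        (α ⬝ᵥ (((1 : Matrix (Fin p) (Fin p) ℝ) - D * Dᵀ) *ᵥ α)
          + α' ⬝ᵥ (((1 : Matrix (Fin p') (Fin p') ℝ) - Dᵀ * D) *ᵥ α')
          + 2 * (α ⬝ᵥ ((D - D * Dᵀ * D) *ᵥ α')))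
      ∂((volume {x : Fin p' → ℝ | ∑ k : Fin p', (x k) ^ 2 ≤ 1})⁻¹ •
          volume.restrict {x : Fin p' → ℝ | ∑ k : Fin p', (x k) ^ 2 ≤ 1})
      ∂((volume {x : Fin p → ℝ | ∑ j : Fin p, (x j) ^ 2 ≤ 1})⁻¹ •
          volume.restrict {x : Fin p → ℝ | ∑ j : Fin p, (x j) ^ 2 ≤ 1}))
    = ((p : ℝ) - ∑ j : Fin p, (σ j) ^ 2) / ((p : ℝ) + 2)
      + ((p' : ℝ) - ∑ j : Fin p, (σ j) ^ 2) / ((p' : ℝ) + 2) := by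
  have hDDt : (D * Dᵀ).trace = ∑ j, σ j ^ 2 := by
    rw [hD, trace_mul_transpose_of_orthogonal hU hV]
    exact trace_rectDiagonal_mul_transpose hp σ
  have hDtD : (Dᵀ * D).trace = ∑ j, σ j ^ 2 := by rw [trace_mul_comm, hDDt]
  have hinner : ∀ α : Fin p → ℝ, ∫ α', (α ⬝ᵥ ((1 - D * Dᵀ) *ᵥ α) + α' ⬝ᵥ ((1 - Dᵀ * D) *ᵥ α')
      + 2 * (α ⬝ᵥ ((D - D * Dᵀ * D) *ᵥ α'))) ∂uniformBall (Fin p') =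
      α ⬝ᵥ ((1 - D * Dᵀ) *ᵥ α) + (p' - ∑ j, σ j ^ 2) / (p' + 2) := by
    intro α
    simp_rw [dotProduct_mulVec α (D - D * Dᵀ * D)]
    rw [integral_add (integrable_uniformBall (by fun_prop)) (integrable_uniformBall (by fun_prop)),
      integral_add (integrable_const _) (integrable_uniformBall (by fun_prop)), integral_const_mul,
      integral_dotProduct_uniformBall, integral_const, integral_dotProduct_mulVec_self_uniformBall]
    simp [trace_sub, hDtD]
  -- `μ[|s]` unfolds to the normalised restriction `(μ s)⁻¹ • μ.restrict s` of the statement.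
  change ∫ α, ∫ α', _ ∂uniformBall (Fin p') ∂uniformBall (Fin p) = _
  rw [integral_congr_ae (ae_of_all _ hinner),
    integral_add (integrable_uniformBall (by fun_prop)) (integrable_const _),
    integral_dotProduct_mulVec_self_uniformBall, integral_const]
  simp [trace_sub, hDDt]

/-- the expected asymptotic TD quadratic form, with `α, α'`
independent and uniform on the unit balls of `ℝ^p` and `ℝ^{p'}`, equals
`(p − ∑σ_j²)/(p+2) + (p' − ∑σ_j²)/(p'+2)`. -/
theorem expected_td_quadform_uniform_balls (p p' : ℕ) (hp : p ≤ p')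
    (D : Matrix (Fin p) (Fin p') ℝ)
    (U : Matrix (Fin p) (Fin p) ℝ) (V : Matrix (Fin p') (Fin p') ℝ)
    (σ : Fin p → ℝ) (hU : Uᵀ * U = 1) (hV : Vᵀ * V = 1)
    (hσmono : Antitone σ) (hσ : ∀ j, 0 ≤ σ j)
    (hD : D = U * (Matrix.of fun (i : Fin p) (j : Fin p') =>
      if (i : ℕ) = (j : ℕ) then σ i else 0) * Vᵀ) :
    (∫ α : Fin p → ℝ,
      ∫ α' : Fin p' → ℝ,
        (α ⬝ᵥ (((1 : Matrix (Fin p) (Fin p) ℝ) - D * Dᵀ) *ᵥ α)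
          + α' ⬝ᵥ (((1 : Matrix (Fin p') (Fin p') ℝ) - Dᵀ * D) *ᵥ α')
          + 2 * (α ⬝ᵥ ((D - D * Dᵀ * D) *ᵥ α')))
      ∂((volume {x : Fin p' → ℝ | ∑ k : Fin p', (x k) ^ 2 ≤ 1})⁻¹ •
          volume.restrict {x : Fin p' → ℝ | ∑ k : Fin p', (x k) ^ 2 ≤ 1})
      ∂((volume {x : Fin p → ℝ | ∑ j : Fin p, (x j) ^ 2 ≤ 1})⁻¹ •
          volume.restrict {x : Fin p → ℝ | ∑ j : Fin p, (x j) ^ 2 ≤ 1}))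
    = ((p : ℝ) - ∑ j : Fin p, (σ j) ^ 2) / ((p : ℝ) + 2)
      + ((p' : ℝ) - ∑ j : Fin p, (σ j) ^ 2) / ((p' : ℝ) + 2) :=
  expected_td_quadform_uniform_balls_general p p' hp D U V σ hU hV hD
end
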